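/- For every positive even integer m and every positive integer n, F_m * (sum over k from 1 to n of L_{2mk}) = F_{mn} L_{mn+m}. -/

import Mathlib

/-!
Extended to negative indices, `F_{-n} = (-1)^{n+1} F_n`, and the addition law
`F_{a+b} = F_a F_{b+1} + F_{a-1} F_b` holds on all of `ℤ`; together they give
`F_a L_b = F_{a+b} + (-1)^b F_{a-b}`. For even `m` each summand becomes
`F_m L_{2mk} = F_{(2k+1)m} - F_{(2k-1)m}`, so the sum telescopes to `F_{(2n+1)m} - F_m`,
which is what the same product formula gives for `F_{mn} L_{mn+m}`.
-/

/-- Fibonacci numbers extended to all integers via `F_{-n} = (-1)^{n-1} F_n`. -/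
def fibZ (n : ℤ) : ℤ :=
  if 0 ≤ n then (Nat.fib n.toNat : ℤ) else (-1) ^ ((-n).toNat + 1) * (Nat.fib (-n).toNat : ℤ)

/-- Lucas numbers extended to all integers, `L_n = F_{n-1} + F_{n+1}`. -/
def lucasZ (n : ℤ) : ℤ := fibZ (n - 1) + fibZ (n + 1)

open Finset

@[simp]
lemma fibZ_natCast (k : ℕ) : fibZ k = Nat.fib k := by
  simp [fibZ]

@[simp]
lemma fibZ_zero : fibZ 0 = 0 := fibZ_natCast 0

@[simp]
lemma fibZ_one : fibZ 1 = 1 := fibZ_natCast 1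

lemma fibZ_neg_natCast (k : ℕ) : fibZ (-k) = -(-1) ^ k * Nat.fib k := by
  simp [fibZ, pow_succ]

lemma fibZ_neg (n : ℤ) : fibZ (-n) = -n.negOnePow * fibZ n := by
  obtain ⟨k, rfl | rfl⟩ := Int.eq_nat_or_neg n
  · rw [fibZ_neg_natCast, fibZ_natCast, Int.coe_negOnePow_natCast]
  · have hsq : (-1 : ℤ) ^ k * (-1) ^ k = 1 := by
      rw [← pow_add]; exact Even.neg_one_pow ⟨k, rfl⟩
    rw [neg_neg, fibZ_neg_natCast, fibZ_natCast, Int.negOnePow_neg, Int.coe_negOnePow_natCast]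
    linear_combination (-(Nat.fib k : ℤ)) * hsq

lemma fibZ_add_two (n : ℤ) : fibZ (n + 2) = fibZ n + fibZ (n + 1) := by
  obtain ⟨k, rfl | rfl⟩ := Int.eq_nat_or_neg n
  · rw [show (k : ℤ) + 2 = (k + 2 : ℕ) by push_cast; ring,
      show (k : ℤ) + 1 = (k + 1 : ℕ) by push_cast; ring]
    simp only [fibZ_natCast, Nat.fib_add_two]
    push_cast; ring
  · rcases k with _ | _ | k
    · decide
    · decide
    · have hk := Nat.fib_add_two (n := k)
      rw [show -((k + 2 : ℕ) : ℤ) + 2 = -(k : ℤ) by push_cast; ring,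
        show -((k + 2 : ℕ) : ℤ) + 1 = -((k + 1 : ℕ) : ℤ) by push_cast; ring,
        fibZ_neg_natCast, fibZ_neg_natCast, fibZ_neg_natCast, hk]
      push_cast
      ring

lemma fibZ_add (a b : ℤ) : fibZ (a + b) = fibZ a * fibZ (b + 1) + fibZ (a - 1) * fibZ b := by
  induction b using Int.induction_on generalizing a with
  | zero => simp
  | succ b ih =>
    have ha := fibZ_add_two (a - 1)
    have hb := fibZ_add_two b
    rw [show a - 1 + 2 = a + 1 by ring, sub_add_cancel] at ha
    rw [show a + (b + 1) = a + 1 + b by ring, ih, show (b : ℤ) + 1 + 1 = b + 2 by ring, hb, ha,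
      add_sub_cancel_right]
    ring
  | pred b ih =>
    have ha := fibZ_add_two (a - 1 - 1)
    have hb := fibZ_add_two (-(b : ℤ) - 1)
    rw [show a - 1 - 1 + 2 = a by ring, show a - 1 - 1 + 1 = a - 1 by ring] at ha
    rw [show -(b : ℤ) - 1 + 2 = -b + 1 by ring, sub_add_cancel] at hb
    rw [show a + (-(b : ℤ) - 1) = a - 1 + -b by ring, ih, sub_add_cancel, ha, hb]
    ring

lemma fibZ_mul_lucasZ (a b : ℤ) :
    fibZ a * lucasZ b = fibZ (a + b) + b.negOnePow * fibZ (a - b) := by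
  have hsq : (b.negOnePow : ℤ) * b.negOnePow = 1 := by
    rw [← Units.val_mul, Int.units_mul_self, Units.val_one]
  have h₁ : fibZ (-b + 1) = b.negOnePow * fibZ (b - 1) := by
    rw [show -b + 1 = -(b - 1) by ring, fibZ_neg, Int.negOnePow_sub, Int.negOnePow_one]
    push_cast; ring
  have h₀ : fibZ (-b) = -b.negOnePow * fibZ b := fibZ_neg b
  rw [lucasZ, fibZ_add a b, sub_eq_add_neg a b, fibZ_add a (-b), h₁, h₀]
  linear_combination (fibZ (a - 1) * fibZ b - fibZ a * fibZ (b - 1)) * hsq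

lemma fibZ_neg_of_even {n : ℤ} (hn : Even n) : fibZ (-n) = -fibZ n := by
  rw [fibZ_neg, Int.negOnePow_even n hn, Units.val_one, neg_one_mul]

lemma fibZ_mul_lucasZ_of_even (a : ℤ) {b : ℤ} (hb : Even b) :
    fibZ a * lucasZ b = fibZ (a + b) + fibZ (a - b) := by
  rw [fibZ_mul_lucasZ, Int.negOnePow_even b hb, Units.val_one, one_mul]

lemma fibZ_mul_lucasZ_two_mul_mul {m : ℤ} (hm : Even m) (k : ℤ) :
    fibZ m * lucasZ (2 * m * k) = fibZ ((2 * k + 1) * m) - fibZ ((2 * k - 1) * m) := by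
  rw [fibZ_mul_lucasZ_of_even m ((even_two_mul m).mul_right k),
    show m - 2 * m * k = -((2 * k - 1) * m) by ring, fibZ_neg_of_even (hm.mul_left _)]
  ring_nf

lemma fibZ_mul_sum_lucasZ_two_mul_mul {m : ℤ} (hm : Even m) (n : ℕ) :
    fibZ m * ∑ k ∈ Icc 1 n, lucasZ (2 * m * k) = fibZ ((2 * n + 1) * m) - fibZ m := by
  induction n with
  | zero => simp
  | succ n ih =>
    rw [sum_Icc_succ_top (by omega), mul_add, ih, fibZ_mul_lucasZ_two_mul_mul hm]
    push_cast
    ring_nf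

theorem stmt18_general (m : ℤ) (hme : Even m) (n : ℕ) :
    fibZ m * ∑ k ∈ Finset.Icc 1 n, lucasZ (2 * m * k)
      = fibZ (m * n) * lucasZ (m * n + m) := by
  rw [fibZ_mul_sum_lucasZ_two_mul_mul hme,
    fibZ_mul_lucasZ_of_even _ ((hme.mul_right n).add hme),
    show m * n + (m * n + m) = (2 * n + 1) * m by ring, show m * n - (m * n + m) = -m by ring,
    fibZ_neg_of_even hme]
  ring

theorem stmt18 (m : ℤ) (hm : 0 < m) (hme : Even m) (n : ℕ) (hn : 0 < n) :
    fibZ m * ∑ k ∈ Finset.Icc 1 n, lucasZ (2 * m * k)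
      = fibZ (m * n) * lucasZ (m * n + m) :=
  stmt18_general m hme n
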